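/- For every α > 1 and every x ∈ ℝ, the series (1/(πα)) ∑_{j=0}^{∞} (−1)^{j} Γ((2j+1)/α) x^{2j}/(2j)! converges absolutely and its sum equals p_α(x). -/

import Mathlib

open MeasureTheory Real Set

/-- The 1-dimensional symmetric `α`-stable density at time 1, via Fourier inversion. -/
noncomputable def stableDensity (α : ℝ) (x : ℝ) : ℝ :=
  (1 / Real.pi) * ∫ y in Set.Ioi (0 : ℝ), Real.cos (x * y) * Real.exp (-(y ^ α))

open Filter
open scoped Nat

/-!
Expand `cos (x * y)` in its Taylor series and integrate term by term against `exp (-y ^ α)` on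
`(0, ∞)`: the moments are `∫ y ^ (2 * j) * exp (-y ^ α) = Γ((2 * j + 1) / α) / α`. Term-by-term
integration is justified by dominated convergence, the absolute series being dominated by
`cosh (x * y) * exp (-y ^ α)`, which is integrable because for `α > 1` the weight `exp (-y ^ α)`
decays faster than any exponential.
-/

section CosineMoments

variable {μ : Measure ℝ} {w : ℝ → ℝ}

theorem norm_cos_series_term_mul (j : ℕ) (t c : ℝ) :
    ‖(-1) ^ j * t ^ (2 * j) / (2 * j)! * c‖ = t ^ (2 * j) / (2 * j)! * |c| := by
  rw [norm_mul, norm_div, norm_mul, norm_pow, norm_neg, norm_one, one_pow, one_mul,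
    norm_of_nonneg ((even_two_mul j).pow_nonneg t), norm_natCast, norm_eq_abs]

theorem hasSum_cosh_series_mul_abs (t c : ℝ) :
    HasSum (fun j : ℕ => t ^ (2 * j) / (2 * j)! * |c|) (cosh t * |c|) :=
  (hasSum_cosh t).mul_right _

theorem integral_cos_series_term_mul (j : ℕ) (x : ℝ) :
    ∫ y, (-1) ^ j * (x * y) ^ (2 * j) / (2 * j)! * w y ∂μ =
      (-1) ^ j * x ^ (2 * j) / (2 * j)! * ∫ y, y ^ (2 * j) * w y ∂μ := by
  rw [← integral_const_mul]
  congr 1 with y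
  ring

variable {x : ℝ}

theorem integrable_tsum_cosh_series_mul_abs (hcosh : Integrable (fun y => cosh (x * y) * w y) μ) :
    Integrable (fun y => ∑' j : ℕ, (x * y) ^ (2 * j) / (2 * j)! * |w y|) μ := by
  simp_rw [fun y => (hasSum_cosh_series_mul_abs (x * y) (w y)).tsum_eq]
  refine hcosh.norm.congr (ae_of_all _ fun y => ?_)
  dsimp only
  rw [norm_mul, norm_of_nonneg (cosh_pos _).le, norm_eq_abs]

theorem summable_integral_cosh_series_mul_abs (hw : AEStronglyMeasurable w μ)
    (hcosh : Integrable (fun y => cosh (x * y) * w y) μ) :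
    Summable (fun j : ℕ => ∫ y, (x * y) ^ (2 * j) / (2 * j)! * |w y| ∂μ) := by
  have hnonneg (j : ℕ) (y : ℝ) : 0 ≤ (x * y) ^ (2 * j) / (2 * j)! * |w y| :=
    mul_nonneg (div_nonneg ((even_two_mul j).pow_nonneg _) (by positivity)) (abs_nonneg _)
  exact (hasSum_integral_of_dominated_convergence
    (F := fun j y => (x * y) ^ (2 * j) / (2 * j)! * |w y|) _ (fun j => by fun_prop)
    (fun j => ae_of_all _ fun y => (norm_of_nonneg (hnonneg j y)).le)
    (ae_of_all _ fun y => (hasSum_cosh_series_mul_abs _ _).summable)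
    (integrable_tsum_cosh_series_mul_abs hcosh)
    (ae_of_all _ fun y => hasSum_cosh_series_mul_abs _ _)).summable

theorem summable_norm_cos_moment_series (hw : AEStronglyMeasurable w μ)
    (hcosh : Integrable (fun y => cosh (x * y) * w y) μ) :
    Summable (fun j : ℕ => ‖(-1) ^ j * x ^ (2 * j) / (2 * j)! * ∫ y, y ^ (2 * j) * w y ∂μ‖) := by
  refine (summable_integral_cosh_series_mul_abs hw hcosh).of_norm_bounded fun j => ?_
  rw [norm_norm, ← integral_cos_series_term_mul]
  refine (norm_integral_le_integral_norm _).trans_eq (integral_congr_ae (ae_of_all _ fun y => ?_))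
  exact norm_cos_series_term_mul j (x * y) (w y)

theorem hasSum_cos_moment_series (hw : AEStronglyMeasurable w μ)
    (hcosh : Integrable (fun y => cosh (x * y) * w y) μ) :
    HasSum (fun j : ℕ => (-1) ^ j * x ^ (2 * j) / (2 * j)! * ∫ y, y ^ (2 * j) * w y ∂μ)
      (∫ y, cos (x * y) * w y ∂μ) := by
  simp_rw [← integral_cos_series_term_mul]
  exact hasSum_integral_of_dominated_convergence _ (fun j => by fun_prop)
    (fun j => ae_of_all _ fun y => (norm_cos_series_term_mul j (x * y) (w y)).le)
    (ae_of_all _ fun y => (hasSum_cosh_series_mul_abs _ _).summable)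
    (integrable_tsum_cosh_series_mul_abs hcosh)
    (ae_of_all _ fun y => (hasSum_cos (x * y)).mul_right (w y))

end CosineMoments

theorem integrableOn_exp_mul_mul_exp_neg_rpow {α : ℝ} (hα : 1 < α) (c : ℝ) :
    IntegrableOn (fun y => exp (c * y) * exp (-y ^ α)) (Ioi 0) := by
  refine integrable_of_isBigO_exp_neg one_pos
    (Continuous.continuousOn (by fun_prop (disch := linarith))) (.of_bound' ?_)
  have hlarge : ∀ᶠ y in atTop, c + 1 ≤ y ^ (α - 1) :=
    (tendsto_rpow_atTop (by linarith)).eventually_ge_atTop _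
  filter_upwards [hlarge, eventually_gt_atTop 0] with y hy hy0
  have hpow : y ^ α = y ^ (α - 1) * y := by
    rw [rpow_sub_one hy0.ne', div_mul_cancel₀ _ hy0.ne']
  rw [norm_of_nonneg (by positivity), norm_of_nonneg (by positivity), ← exp_add]
  exact exp_le_exp.2 (by nlinarith)

theorem integrableOn_cosh_mul_mul_exp_neg_rpow {α : ℝ} (hα : 1 < α) (x : ℝ) :
    IntegrableOn (fun y => cosh (x * y) * exp (-y ^ α)) (Ioi 0) := by
  have hcosh : (fun y => cosh (x * y) * exp (-y ^ α)) =
      fun y => (exp (x * y) * exp (-y ^ α) + exp (-x * y) * exp (-y ^ α)) / 2 := by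
    ext y
    rw [cosh_eq, neg_mul]
    ring
  rw [hcosh]
  exact ((integrableOn_exp_mul_mul_exp_neg_rpow hα x).add
    (integrableOn_exp_mul_mul_exp_neg_rpow hα (-x))).div_const 2

theorem integral_pow_mul_exp_neg_rpow {α : ℝ} (hα : 0 < α) (n : ℕ) :
    ∫ y in Ioi 0, y ^ n * exp (-y ^ α) = 1 / α * Gamma ((n + 1) / α) := by
  simpa using integral_rpow_mul_exp_neg_rpow hα (q := n) (by linarith [n.cast_nonneg (α := ℝ)])

theorem convergent_series_expansion (α : ℝ) (hα : 1 < α) (x : ℝ) :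
    Summable (fun j : ℕ =>
      |(1 / (Real.pi * α)) * (-1 : ℝ) ^ j * Real.Gamma ((2 * (j : ℝ) + 1) / α) *
        x ^ (2 * j) / (Nat.factorial (2 * j) : ℝ)|) ∧
    (∑' j : ℕ, (1 / (Real.pi * α)) * (-1 : ℝ) ^ j * Real.Gamma ((2 * (j : ℝ) + 1) / α) *
        x ^ (2 * j) / (Nat.factorial (2 * j) : ℝ)) = stableDensity α x := by
  have hw : AEStronglyMeasurable (fun y : ℝ => exp (-y ^ α)) (volume.restrict (Ioi 0)) := by
    fun_prop
  have hcosh := integrableOn_cosh_mul_mul_exp_neg_rpow hα x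
  have hterm (j : ℕ) : 1 / (π * α) * (-1) ^ j * Gamma ((2 * j + 1) / α) * x ^ (2 * j) / (2 * j)!
      = 1 / π * ((-1) ^ j * x ^ (2 * j) / (2 * j)! *
        ∫ y in Ioi 0, y ^ (2 * j) * exp (-y ^ α)) := by
    rw [integral_pow_mul_exp_neg_rpow (by linarith)]
    push_cast
    ring
  simp_rw [hterm]
  refine ⟨?_, ?_⟩
  · refine ((summable_norm_cos_moment_series hw hcosh).mul_left (1 / π)).congr fun j => ?_
    rw [abs_mul, abs_of_pos (by positivity), norm_eq_abs]
  · rw [tsum_mul_left, (hasSum_cos_moment_series hw hcosh).tsum_eq, stableDensity]
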